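/- For d = 3 and the H₊ state |H₊⟩ = ((1+√3)|0⟩ + |1⟩ + |2⟩)/√(2(3+√3)) in ℂ³, the min-thauma SDP has optimal value sup{ ⟨H₊|σ|H₊⟩ : σ positive semidefinite on ℂ³, ‖σ‖_{W,1} ≤ 1 } = 1/(3 − √3); that is, θ_min(H₊) = log₂(3 − √3). -/

import Mathlib

open Matrix Complex BigOperators
open scoped ComplexOrder

noncomputable section

namespace Magic

/-- ω = exp(2πi/d) -/
def omegaC (d : ℕ) : ℂ := Complex.exp (2 * Real.pi * Complex.I / d)

/-- τ = exp((d+1)πi/d) -/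
def tauC (d : ℕ) : ℂ := Complex.exp ((d + 1) * Real.pi * Complex.I / d)

/-- Shift operator X|j⟩ = |j⊕1⟩. -/
def shiftX (d : ℕ) [NeZero d] : Matrix (ZMod d) (ZMod d) ℂ :=
  Matrix.of fun r c => if r = c + 1 then 1 else 0

/-- Boost operator Z|j⟩ = ω^j |j⟩. -/
def boostZ (d : ℕ) [NeZero d] : Matrix (ZMod d) (ZMod d) ℂ :=
  Matrix.diagonal fun j => omegaC d ^ j.val

/-- Heisenberg–Weyl operator T_u = τ^{-a₁a₂} Z^{a₁} X^{a₂}. -/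
def HW (d : ℕ) [NeZero d] (u : ZMod d × ZMod d) : Matrix (ZMod d) (ZMod d) ℂ :=
  tauC d ^ (-((u.1.val * u.2.val : ℕ) : ℤ)) • (boostZ d ^ u.1.val * shiftX d ^ u.2.val)

/-- A₀ = (1/d) ∑_u T_u. -/
def A0 (d : ℕ) [NeZero d] : Matrix (ZMod d) (ZMod d) ℂ :=
  (d : ℂ)⁻¹ • ∑ u : ZMod d × ZMod d, HW d u

/-- Phase-space point operators A_u = T_u A₀ T_u†. -/
def Apt (d : ℕ) [NeZero d] (u : ZMod d × ZMod d) : Matrix (ZMod d) (ZMod d) ℂ :=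
  HW d u * A0 d * (HW d u)ᴴ

/-- Discrete Wigner function W_V(u) = tr(A_u V)/d. -/
def wig (d : ℕ) [NeZero d] (V : Matrix (ZMod d) (ZMod d) ℂ) (u : ZMod d × ZMod d) : ℂ :=
  (Apt d u * V).trace / d

/-- Wigner trace norm ‖V‖_{W,1} = ∑_u |W_V(u)|. -/
def wnorm1 (d : ℕ) [NeZero d] (V : Matrix (ZMod d) (ZMod d) ℂ) : ℝ :=
  ∑ u : ZMod d × ZMod d, ‖wig d V u‖

/-- Wigner spectral norm ‖V‖_{W,∞} = d · max_u |W_V(u)|. -/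
def wnormInf (d : ℕ) [NeZero d] (V : Matrix (ZMod d) (ZMod d) ℂ) : ℝ :=
  (d : ℝ) * ⨆ u : ZMod d × ZMod d, ‖wig d V u‖

end Magic

namespace Magic

/-- The Strange state |S⟩ = (|1⟩ - |2⟩)/√2. -/
def strange : ZMod 3 → ℂ :=
  fun j => if j = 1 then ((Real.sqrt 2)⁻¹ : ℝ)
    else if j = 2 then (-(Real.sqrt 2)⁻¹ : ℝ) else 0

/-- The Norrell state |N⟩ = (-|0⟩ + 2|1⟩ - |2⟩)/√6. -/
def norrell : ZMod 3 → ℂ :=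
  fun j => if j = 1 then ((2 / Real.sqrt 6 : ℝ) : ℂ) else ((-(Real.sqrt 6)⁻¹ : ℝ) : ℂ)

/-- The H₊ state |H₊⟩ = ((1+√3)|0⟩ + |1⟩ + |2⟩)/√(2(3+√3)). -/
def hplus : ZMod 3 → ℂ :=
  fun j => if j = 0 then (((1 + Real.sqrt 3) / Real.sqrt (2 * (3 + Real.sqrt 3)) : ℝ) : ℂ)
    else (((Real.sqrt (2 * (3 + Real.sqrt 3)))⁻¹ : ℝ) : ℂ)

/-- ξ = exp(2πi/9). -/
def xi : ℂ := Complex.exp (2 * Real.pi * Complex.I / 9)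

/-- The T state |T⟩ = (ξ|0⟩ + |1⟩ + ξ⁻¹|2⟩)/√3. -/
def tket : ZMod 3 → ℂ :=
  fun j => (if j = 0 then xi else if j = 1 then 1 else xi⁻¹) / ((Real.sqrt 3 : ℝ) : ℂ)

/-- The rank-one projector |ψ⟩⟨ψ|. -/
def projOf (ψ : ZMod 3 → ℂ) : Matrix (ZMod 3) (ZMod 3) ℂ :=
  Matrix.vecMulVec ψ (star ψ)

end Magic


/-!
Weak duality with explicit primal and dual witnesses. For odd `d` the point operators are
`(A_u)_{jk} = ω^{a₁(j-k)} [j + k = 2a₂]`, so `W_V(u) = d⁻¹ ∑_j ω^{2a₁(j-a₂)} V_{2a₂-j, j}`.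

Primal: the stabilizer state `|+⟩⟨+|` has Wigner function `1/d` on the line `a₁ = 0`, hence
Wigner trace norm `1`, and overlap `(3 + √3)/6 = 1/(3 - √3)` with `H₊`.

Dual: `|H₊⟩⟨H₊| + |w⟩⟨w| = ∑_u y_u A_u` for `w = c(|1⟩ - |2⟩)`, `c² = (3 - √3)/12`, and weights
`y_u = m = (3 + √3)/18` on the axes `a₁a₂ = 0`, `y_u = (3 - 2√3)/18` elsewhere. Since
`tr(A_u σ) = 3 W_σ(u)` and `|y_u| ≤ m`, every feasible `σ` satisfies
`⟨H₊|σ|H₊⟩ ≤ ⟨H₊|σ|H₊⟩ + ⟨w|σ|w⟩ ≤ 3m ‖σ‖_{W,1} ≤ 3m = 1/(3 - √3)`.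
-/

namespace Magic

open ZMod

section PhaseSpace

variable {d : ℕ}

/-- For odd `d`, `half d = 2⁻¹` in `ZMod d` and `τ = ω ^ half d`. -/
def half (d : ℕ) : ZMod d := ((d + 1) / 2 : ℕ)

theorem two_mul_half (hd : Odd d) : 2 * half d = 1 := by
  have h : 2 * ((d + 1) / 2) = d + 1 := Nat.two_mul_div_two_of_even hd.add_one
  rw [half, ← Nat.cast_ofNat, ← Nat.cast_mul, h]
  simp

theorem two_mul_eq_zero_iff (hd : Odd d) {x : ZMod d} : 2 * x = 0 ↔ x = 0 := by
  refine ⟨fun h => ?_, fun h => by rw [h, mul_zero]⟩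
  rw [← one_mul x, ← two_mul_half hd, mul_comm 2, mul_assoc, h, mul_zero]

theorem half_mul_eq_zero_iff (hd : Odd d) {x : ZMod d} : half d * x = 0 ↔ x = 0 := by
  refine ⟨fun h => ?_, fun h => by rw [h, mul_zero]⟩
  rw [← one_mul x, ← two_mul_half hd, mul_assoc, h, mul_zero]

def axisWeight (m s : ℝ) (u : ZMod d × ZMod d) : ℝ := if u.1 = 0 ∨ u.2 = 0 then m else s

theorem abs_axisWeight_le {m s : ℝ} (hm : 0 ≤ m) (hs : |s| ≤ m) (u : ZMod d × ZMod d) :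
    |axisWeight m s u| ≤ m := by
  unfold axisWeight
  split_ifs
  · exact (abs_of_nonneg hm).le
  · exact hs

variable [NeZero d]

theorem omegaC_pow_val (j : ZMod d) : omegaC d ^ j.val = stdAddChar j := by
  rw [omegaC, ← Complex.exp_nat_mul, stdAddChar_apply, toCircle_apply]
  congr 1
  ring

theorem tauC_eq_stdAddChar_half (hd : Odd d) : tauC d = stdAddChar (half d) := by
  have h : (((d + 1) / 2 : ℕ) : ℂ) * 2 = d + 1 := by
    exact_mod_cast Nat.div_two_mul_two_of_even hd.add_one
  rw [tauC, half, stdAddChar_apply, toCircle_natCast, ← h]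
  congr 1
  ring

theorem shiftX_pow_apply (n : ℕ) (j k : ZMod d) :
    (shiftX d ^ n) j k = if j = k + n then 1 else 0 := by
  induction n generalizing j with
  | zero => simp [Matrix.one_apply]
  | succ n ih =>
    rw [pow_succ', Matrix.mul_apply, Finset.sum_eq_single (j - 1)]
    · rw [ih]
      simp only [shiftX, Matrix.of_apply, sub_add_cancel, if_true, one_mul]
      push_cast
      simp only [sub_eq_iff_eq_add, add_assoc]
    · intro p _ hp
      simp only [shiftX, Matrix.of_apply]
      rw [if_neg (fun h => hp (by rw [h, add_sub_cancel_right])), zero_mul]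
    · simp

theorem HW_apply (hd : Odd d) (u : ZMod d × ZMod d) (j k : ZMod d) :
    HW d u j k = stdAddChar (u.1 * j - half d * u.1 * u.2) * if j = k + u.2 then 1 else 0 := by
  rw [HW, tauC_eq_stdAddChar_half hd, Matrix.smul_apply, boostZ, Matrix.diagonal_pow,
    Matrix.diagonal_mul, shiftX_pow_apply, ZMod.natCast_zmod_val, Pi.pow_apply,
    omegaC_pow_val, ← AddChar.map_nsmul_eq_pow, ← AddChar.map_zsmul_eq_zpow, smul_eq_mul,
    ← mul_assoc, ← AddChar.map_add_eq_mul, nsmul_eq_mul, zsmul_eq_mul]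
  congr 2
  push_cast
  simp only [ZMod.natCast_zmod_val]
  ring

theorem sum_stdAddChar_mul (c : ZMod d) :
    ∑ x : ZMod d, stdAddChar (x * c) = if c = 0 then (d : ℂ) else 0 := by
  rw [AddChar.sum_mulShift c (isPrimitive_stdAddChar d), ZMod.card, Nat.cast_ite, Nat.cast_zero]

theorem A0_apply (hd : Odd d) (j k : ZMod d) : A0 d j k = if j + k = 0 then 1 else 0 := by
  have hrow (a : ZMod d) : ∑ b : ZMod d, HW d (a, b) j k = stdAddChar (a * (half d * (j + k))) := by
    simp only [HW_apply hd, ← sub_eq_iff_eq_add', mul_ite, mul_one, mul_zero,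
      Finset.sum_ite_eq, Finset.mem_univ, if_true]
    congr 1
    linear_combination (-(a * j)) * two_mul_half hd
  rw [A0, Matrix.smul_apply, Matrix.sum_apply, Fintype.sum_prod_type]
  simp only [hrow, sum_stdAddChar_mul, half_mul_eq_zero_iff hd, smul_eq_mul, mul_ite, mul_zero]
  rw [inv_mul_cancel₀ (NeZero.ne _)]

section WeightedShift

variable {M N : Matrix (ZMod d) (ZMod d) ℂ} {f : ZMod d → ℂ} {b : ZMod d}

theorem mul_apply_of_weightedShift (hM : ∀ j k, M j k = f j * if j = k + b then 1 else 0)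
    (j k : ZMod d) : (M * N) j k = f j * N (j - b) k := by
  simp only [Matrix.mul_apply, hM, ← sub_eq_iff_eq_add, mul_ite, ite_mul, mul_one, mul_zero,
    zero_mul, Finset.sum_ite_eq, Finset.mem_univ, if_true]

theorem mul_conjTranspose_apply_of_weightedShift
    (hM : ∀ j k, M j k = f j * if j = k + b then 1 else 0) (j k : ZMod d) :
    (N * Mᴴ) j k = N j (k - b) * star (f k) := by
  simp only [Matrix.mul_apply, Matrix.conjTranspose_apply, hM, ← sub_eq_iff_eq_add,
    apply_ite star, star_zero, mul_ite, mul_one, mul_zero, Finset.sum_ite_eq,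
    Finset.mem_univ, if_true]

theorem conj_apply_of_weightedShift (hM : ∀ j k, M j k = f j * if j = k + b then 1 else 0)
    (j k : ZMod d) : (M * N * Mᴴ) j k = f j * star (f k) * N (j - b) (k - b) := by
  rw [mul_assoc, mul_apply_of_weightedShift hM, mul_conjTranspose_apply_of_weightedShift hM]
  ring

end WeightedShift

theorem Apt_apply (hd : Odd d) (u : ZMod d × ZMod d) (j k : ZMod d) :
    Apt d u j k = stdAddChar (u.1 * (j - k)) * if j + k = 2 * u.2 then 1 else 0 := by
  rw [Apt, conj_apply_of_weightedShift (HW_apply hd u), A0_apply hd, Complex.star_def,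
    ← AddChar.map_neg_eq_conj, ← AddChar.map_add_eq_mul]
  congr 2
  · ring
  · exact propext ⟨fun h => by linear_combination h, fun h => by linear_combination h⟩

theorem wig_apply (hd : Odd d) (V : Matrix (ZMod d) (ZMod d) ℂ) (u : ZMod d × ZMod d) :
    wig d V u = (d : ℂ)⁻¹ * ∑ j, stdAddChar (2 * u.1 * (j - u.2)) * V (2 * u.2 - j) j := by
  rw [wig, div_eq_inv_mul, Matrix.trace]
  congr 1
  refine Finset.sum_congr rfl fun j _ => ?_
  simp only [Matrix.diag_apply, Matrix.mul_apply, Apt_apply hd, ← eq_sub_iff_add_eq',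
    mul_ite, ite_mul, mul_one, mul_zero, zero_mul, Finset.sum_ite_eq', Finset.mem_univ, if_true]
  congr 2
  ring

theorem sum_smul_Apt_apply (hd : Odd d) (y : ZMod d × ZMod d → ℂ) (j k : ZMod d) :
    (∑ u, y u • Apt d u) j k = ∑ a, y (a, half d * (j + k)) * stdAddChar (a * (j - k)) := by
  have hdiag (b : ZMod d) : j + k = 2 * b ↔ half d * (j + k) = b := by
    constructor <;> intro h
    · rw [h, ← mul_assoc, mul_comm (half d), two_mul_half hd, one_mul]
    · rw [← h, ← mul_assoc, two_mul_half hd, one_mul]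
  simp only [Matrix.sum_apply, Fintype.sum_prod_type, Matrix.smul_apply, Apt_apply hd, hdiag,
    smul_eq_mul, mul_ite, mul_one, mul_zero, Finset.sum_ite_eq, Finset.mem_univ, if_true]

theorem sum_axisWeight_mul_stdAddChar (m s : ℝ) (b c : ZMod d) :
    ∑ a, (axisWeight m s (a, b) : ℂ) * stdAddChar (a * c)
      = if b = 0 then (if c = 0 then (d * m : ℂ) else 0)
        else (m - s : ℂ) + if c = 0 then (d * s : ℂ) else 0 := by
  by_cases hb : b = 0
  · simp only [axisWeight, hb, or_true, if_true, ← Finset.mul_sum, sum_stdAddChar_mul]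
    split_ifs <;> ring
  · have hw (a : ZMod d) : (axisWeight m s (a, b) : ℂ) = s + if a = 0 then (m - s : ℂ) else 0 := by
      simp only [axisWeight, hb, or_false]
      split_ifs <;> simp
    simp only [hw, add_mul, Finset.sum_add_distrib, ← Finset.mul_sum, sum_stdAddChar_mul, ite_mul,
      zero_mul, Finset.sum_ite_eq', Finset.mem_univ, if_true, AddChar.map_zero_eq_one, hb, if_false]
    split_ifs <;> ring

def plusProj (d : ℕ) : Matrix (ZMod d) (ZMod d) ℂ := (d : ℂ)⁻¹ • vecMulVec 1 1

theorem plusProj_posSemidef : (plusProj d).PosSemidef := by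
  have h := posSemidef_vecMulVec_self_star (1 : ZMod d → ℂ)
  rw [star_one] at h
  exact h.smul (by positivity)

theorem wig_plusProj (hd : Odd d) (u : ZMod d × ZMod d) :
    wig d (plusProj d) u = if u.1 = 0 then (d : ℂ)⁻¹ else 0 := by
  have hsum : ∑ j, stdAddChar (2 * u.1 * (j - u.2)) = if u.1 = 0 then (d : ℂ) else 0 := by
    calc ∑ j, stdAddChar (2 * u.1 * (j - u.2)) = ∑ x, stdAddChar (x * (2 * u.1)) :=
          Fintype.sum_equiv (Equiv.subRight u.2) _ _ fun j => by rw [mul_comm]; rfl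
      _ = _ := by simp only [sum_stdAddChar_mul, two_mul_eq_zero_iff hd]
  simp only [wig_apply hd, plusProj, Matrix.smul_apply, vecMulVec_apply, Pi.one_apply, mul_one,
    smul_eq_mul, ← Finset.sum_mul, hsum]
  split_ifs <;> simp [NeZero.ne d]

theorem wnorm1_plusProj (hd : Odd d) : wnorm1 d (plusProj d) = 1 := by
  simp only [wnorm1, wig_plusProj hd, apply_ite norm, norm_zero, norm_inv, Complex.norm_natCast,
    Fintype.sum_prod_type_right, Finset.sum_ite_eq', Finset.mem_univ, if_true, Finset.sum_const,
    Finset.card_univ, ZMod.card, nsmul_eq_mul]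
  exact mul_inv_cancel₀ (Nat.cast_ne_zero.mpr (NeZero.ne d))

theorem dotProduct_plusProj_mulVec (x : ZMod d → ℂ) :
    star x ⬝ᵥ plusProj d *ᵥ x = (d : ℂ)⁻¹ * (star (∑ i, x i) * ∑ i, x i) := by
  simp only [plusProj, dotProduct, mulVec, Matrix.smul_apply, vecMulVec_apply, Pi.one_apply,
    Pi.star_apply, star_sum, smul_eq_mul, mul_one, Finset.mul_sum, Finset.sum_mul]
  rw [Finset.sum_comm]
  exact Finset.sum_congr rfl fun _ _ => Finset.sum_congr rfl fun _ _ => by ring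

theorem trace_sum_smul_Apt_mul (y : ZMod d × ZMod d → ℂ) (V : Matrix (ZMod d) (ZMod d) ℂ) :
    ((∑ u, y u • Apt d u) * V).trace = d * ∑ u, y u * wig d V u := by
  simp only [Matrix.sum_mul, Matrix.trace_sum, Matrix.smul_mul, Matrix.trace_smul, smul_eq_mul,
    wig, Finset.mul_sum]
  refine Finset.sum_congr rfl fun u _ => ?_
  field_simp [NeZero.ne d]

theorem re_sum_mul_wig_le (y : ZMod d × ZMod d → ℝ) {m : ℝ} (hy : ∀ u, |y u| ≤ m)
    (V : Matrix (ZMod d) (ZMod d) ℂ) : (∑ u, (y u : ℂ) * wig d V u).re ≤ m * wnorm1 d V := by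
  rw [Complex.re_sum, wnorm1, Finset.mul_sum]
  refine Finset.sum_le_sum fun u _ => ?_
  calc (↑(y u) * wig d V u).re = y u * (wig d V u).re := Complex.re_ofReal_mul _ _
    _ ≤ |y u| * |(wig d V u).re| := by rw [← abs_mul]; exact le_abs_self _
    _ ≤ m * ‖wig d V u‖ :=
      mul_le_mul (hy u) (Complex.abs_re_le_norm _) (abs_nonneg _) ((abs_nonneg _).trans (hy u))

theorem trace_vecMulVec_star_mul (v : ZMod d → ℂ) (σ : Matrix (ZMod d) (ZMod d) ℂ) :
    (vecMulVec v (star v) * σ).trace = star v ⬝ᵥ σ *ᵥ v := by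
  rw [vecMulVec_mul, trace_vecMulVec, dotProduct_comm, dotProduct_mulVec]

theorem re_dotProduct_mulVec_le_of_certificate {v w : ZMod d → ℂ} {y : ZMod d × ZMod d → ℝ}
    {m : ℝ} (hY : vecMulVec v (star v) + vecMulVec w (star w) = ∑ u, (y u : ℂ) • Apt d u)
    (hy : ∀ u, |y u| ≤ m) {σ : Matrix (ZMod d) (ZMod d) ℂ} (hσ : σ.PosSemidef) :
    (star v ⬝ᵥ σ *ᵥ v).re ≤ d * m * wnorm1 d σ := by
  have hsum : star v ⬝ᵥ σ *ᵥ v + star w ⬝ᵥ σ *ᵥ w = d * ∑ u, (y u : ℂ) * wig d σ u := by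
    rw [← trace_vecMulVec_star_mul, ← trace_vecMulVec_star_mul, ← Matrix.trace_add,
      ← Matrix.add_mul, hY, trace_sum_smul_Apt_mul]
  have hw : 0 ≤ (star w ⬝ᵥ σ *ᵥ w).re := (Complex.le_def.mp (hσ.dotProduct_mulVec_nonneg w)).1
  calc (star v ⬝ᵥ σ *ᵥ v).re ≤ (star v ⬝ᵥ σ *ᵥ v + star w ⬝ᵥ σ *ᵥ w).re := by
        rw [Complex.add_re]; linarith
    _ = d * (∑ u, (y u : ℂ) * wig d σ u).re := by
        rw [hsum, ← Complex.ofReal_natCast, Complex.re_ofReal_mul]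
    _ ≤ d * (m * wnorm1 d σ) := by gcongr; exact re_sum_mul_wig_le y hy σ
    _ = d * m * wnorm1 d σ := by ring

end PhaseSpace

section Qutrit

def certWeight : ZMod 3 × ZMod 3 → ℝ := axisWeight ((3 + √3) / 18) ((3 - 2 * √3) / 18)

def certVec : ZMod 3 → ℂ := fun j =>
  ((if j = 0 then 0 else if j = 1 then √((3 - √3) / 12) else -√((3 - √3) / 12) : ℝ) : ℂ)

theorem hplus_eq_ofReal (j : ZMod 3) : hplus j =
    ((if j = 0 then (1 + √3) / √(2 * (3 + √3)) else (√(2 * (3 + √3)))⁻¹ : ℝ) : ℂ) := by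
  unfold hplus; split_ifs <;> rfl

theorem vecMulVec_hplus_add_vecMulVec_certVec :
    vecMulVec hplus (star hplus) + vecMulVec certVec (star certVec)
      = ∑ u, (certWeight u : ℂ) • Apt 3 u := by
  ext j k
  rw [sum_smul_Apt_apply (by decide), certWeight, sum_axisWeight_mul_stdAddChar]
  simp only [Matrix.add_apply, vecMulVec_apply, Pi.star_apply, hplus_eq_ofReal, certVec,
    Complex.star_def, Complex.conj_ofReal, ← Complex.ofReal_mul, ← Complex.ofReal_add]
  have hs : √3 ^ 2 = 3 := Real.sq_sqrt (by norm_num)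
  have hr : √(2 * (3 + √3)) ^ 2 = 2 * (3 + √3) := Real.sq_sqrt (by positivity)
  have hc : √((3 - √3) / 12) ^ 2 = (3 - √3) / 12 :=
    Real.sq_sqrt (by nlinarith [Real.sqrt_nonneg 3])
  have hr0 : √(2 * (3 + √3)) ≠ 0 := by positivity
  set s := √3
  set r := √(2 * (3 + s))
  set c := √((3 - s) / 12)
  have hA : (1 + s) / r * ((1 + s) / r) = 3 * ((3 + s) / 18) := by
    field_simp; rw [hr]; linear_combination 12 * hs
  have hB : (1 + s) / r * r⁻¹ = (3 + s) / 18 - (3 - 2 * s) / 18 := by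
    field_simp; rw [hr]; linear_combination (-6) * hs
  have hC : r⁻¹ * r⁻¹ = (3 - s) / 12 := by
    field_simp; rw [hr]; linear_combination 2 * hs
  have cases3 (t : ZMod 3) : t = 0 ∨ t = 1 ∨ t = 2 := by decide +revert
  rcases cases3 j with rfl | rfl | rfl <;> rcases cases3 k with rfl | rfl | rfl <;>
    simp (config := {decide := true}) only [if_true, if_false, mul_zero, zero_mul, add_zero] <;>
    norm_cast <;>
    first
      | linear_combination hA
      | linear_combination hB
      | linear_combination hC + hc
      | linear_combination hC - hc

theorem abs_certWeight_le (u : ZMod 3 × ZMod 3) : |certWeight u| ≤ (3 + √3) / 18 := by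
  have hs : √3 < 2 := by
    rw [Real.sqrt_lt' two_pos]; norm_num
  refine abs_axisWeight_le (by positivity) (abs_le.mpr ⟨?_, ?_⟩) u <;>
    linarith [Real.sqrt_nonneg 3]

theorem sum_hplus : ∑ i, hplus i = (((3 + √3) / √(2 * (3 + √3)) : ℝ) : ℂ) := by
  rw [show ∑ i, hplus i = hplus 0 + hplus 1 + hplus 2 from Fin.sum_univ_three hplus]
  simp (config := {decide := true}) only [hplus_eq_ofReal, if_true, if_false]
  have hr0 : √(2 * (3 + √3)) ≠ 0 := by positivity
  push_cast
  field_simp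
  ring

theorem re_dotProduct_plusProj_mulVec_hplus :
    (star hplus ⬝ᵥ plusProj 3 *ᵥ hplus).re = (3 - √3)⁻¹ := by
  rw [dotProduct_plusProj_mulVec, sum_hplus, Complex.star_def, Complex.conj_ofReal,
    ← Complex.ofReal_mul, Nat.cast_ofNat, ← Complex.ofReal_ofNat, ← Complex.ofReal_inv,
    ← Complex.ofReal_mul, Complex.ofReal_re]
  have hs : √3 ^ 2 = 3 := Real.sq_sqrt (by norm_num)
  have hr : √(2 * (3 + √3)) ^ 2 = 2 * (3 + √3) := Real.sq_sqrt (by positivity)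
  have hr0 : √(2 * (3 + √3)) ≠ 0 := by positivity
  have h3 : 3 - √3 ≠ 0 := by nlinarith
  rw [div_mul_div_comm, ← sq, ← sq, hr]
  field_simp
  linear_combination (-1) * hs

end Qutrit

/-- θ_min of the H₊ state:
sup{ ⟨H₊|σ|H₊⟩ : σ ⪰ 0, ‖σ‖_{W,1} ≤ 1 } = 1/(3 - √3). -/
theorem hplus_minThauma_sdp :
    sSup {x : ℝ | ∃ σ : Matrix (ZMod 3) (ZMod 3) ℂ,
      σ.PosSemidef ∧ wnorm1 3 σ ≤ 1 ∧ x = (star hplus ⬝ᵥ σ.mulVec hplus).re}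
      = (3 - Real.sqrt 3)⁻¹ := by
  have hvalue : ((3 : ℕ) : ℝ) * ((3 + √3) / 18) = (3 - √3)⁻¹ := by
    have hs : √3 ^ 2 = 3 := Real.sq_sqrt (by norm_num)
    have h3 : 3 - √3 ≠ 0 := by nlinarith
    field_simp
    linear_combination (-3) * hs
  refine IsGreatest.csSup_eq ⟨⟨plusProj 3, plusProj_posSemidef, (wnorm1_plusProj (by decide)).le,
    re_dotProduct_plusProj_mulVec_hplus.symm⟩, ?_⟩
  rintro _ ⟨σ, hσ, hσW, rfl⟩
  calc (star hplus ⬝ᵥ σ *ᵥ hplus).re ≤ (3 : ℕ) * ((3 + √3) / 18) * wnorm1 3 σ :=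
        re_dotProduct_mulVec_le_of_certificate vecMulVec_hplus_add_vecMulVec_certVec
          abs_certWeight_le hσ
    _ ≤ (3 : ℕ) * ((3 + √3) / 18) := mul_le_of_le_one_right (by positivity) hσW
    _ = (3 - √3)⁻¹ := hvalue

end Magic
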